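/- arXiv:1812.05507 — 2 statements merged into one kernel-verified Lean document; each statement's English description precedes it below -/
import Mathlib

section
/- If for every pair i ≠ j the difference μ_i − μ_j lies in an interval [a_{ij}, b_{ij}], then for every i: l_i ≥ L_i and u_i ≤ U_i, where L_i = 1 + #{j ≠ i : a_{ij} > 0} and U_i = n − #{j ≠ i : b_{ij} ≤ 0}. (This is the deterministic core of Proposition 1: coverage of all pairwise differences implies coverage of all set-ranks.) -/
open Finset

theorem rank_CIs_of_difference_CIs (n : ℕ) (hn : 1 ≤ n) (μ : Fin n → ℝ)
    (a b : Fin n → Fin n → ℝ)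
    (hab : ∀ i j : Fin n, i ≠ j → a i j ≤ μ i - μ j ∧ μ i - μ j ≤ b i j) :
    ∀ i : Fin n,
      1 + (Finset.univ.filter (fun j => j ≠ i ∧ 0 < a i j)).card ≤
          1 + (Finset.univ.filter (fun j => j ≠ i ∧ μ j < μ i)).card ∧
        n - (Finset.univ.filter (fun j => j ≠ i ∧ μ i ≤ μ j)).card ≤
          n - (Finset.univ.filter (fun j => j ≠ i ∧ b i j ≤ 0)).card := by
  intro i
  constructor
  · gcongr 1 + ?_
    apply card_le_card
    intro j hj
    simp only [mem_filter, mem_univ, true_and] at *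
    obtain ⟨hji, ha⟩ := hj
    exact ⟨hji, by linarith [(hab i j (Ne.symm hji)).1]⟩
  · apply Nat.sub_le_sub_left
    apply card_le_card
    intro j hj
    simp only [mem_filter, mem_univ, true_and] at *
    obtain ⟨hji, hb⟩ := hj
    exact ⟨hji, by linarith [(hab i j (Ne.symm hji)).2]⟩
end

section
/- Let y_1,…,y_n be independent Gaussian random variables with y_i ~ N(μ_i, σ_i²), and let q > 0. Define L_i = 1 + #{j : y_i − y_j − q√(σ_i² + σ_j²) > 0} and U_i = n − #{j : y_i − y_j + q√(σ_i² + σ_j²) < 0}. Then the event {|（y_i − μ_i) − (y_j − μ_j)| ≤ q√(σ_i² + σ_j²) for all i ≠ j} implies the event {L_i ≤ l_i and u_i ≤ U_i for all i}, where l_i, u_i are the lower- and upper-ranks of μ. Hence P(∀i, [l_i, u_i] ⊆ [L_i, U_i]) ≥ P(∀ i ≠ j, |(y_i − μ_i) − (y_j − μ_j)| ≤ q√(σ_i² + σ_j²)). -/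
/-! On the event that every centred difference `(y i - μ i) - (y j - μ j)` lies within its
threshold `q √(σ i² + σ j²)`, a pair declared significantly ordered by the data, say
`y i - y j > q √(σ i² + σ j²)`, is also ordered in the means: `μ j < μ i`. Hence the indices
counted in `L i` are among those counted in `l i`, and dually for `U i` and `u i`; the coverage
bound is then monotonicity of the measure along this inclusion of events. -/

open Finset MeasureTheory ProbabilityTheory

section SignificantPairs

variable {ι : Type*} [DecidableEq ι] {a m : ι → ℝ}

theorem filter_pos_sub_sub_subset_filter_lt (s : Finset ι) {w : ι → ℝ} {i : ι} (hw : 0 ≤ w i)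
    (H : ∀ j, i ≠ j → |(a i - m i) - (a j - m j)| ≤ w j) :
    s.filter (fun j => 0 < a i - a j - w j) ⊆ s.filter (fun j => j ≠ i ∧ m j < m i) := by
  intro j hj
  rw [mem_filter] at hj ⊢
  obtain ⟨hjs, hpos⟩ := hj
  have hji : j ≠ i := by
    rintro rfl
    linarith
  have hle := (abs_le.mp (H j hji.symm)).2
  exact ⟨hjs, hji, by linarith⟩

theorem filter_sub_add_neg_subset_filter_le (s : Finset ι) {w : ι → ℝ} {i : ι} (hw : 0 ≤ w i)
    (H : ∀ j, i ≠ j → |(a i - m i) - (a j - m j)| ≤ w j) :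
    s.filter (fun j => a i - a j + w j < 0) ⊆ s.filter (fun j => j ≠ i ∧ m i ≤ m j) := by
  intro j hj
  rw [mem_filter] at hj ⊢
  obtain ⟨hjs, hneg⟩ := hj
  have hji : j ≠ i := by
    rintro rfl
    linarith
  have hge := (abs_le.mp (H j hji.symm)).1
  exact ⟨hjs, hji, by linarith⟩

theorem card_rank_bounds_of_forall_abs_sub_le [Fintype ι] (n : ℕ) {w : ι → ι → ℝ}
    (hw : ∀ i, 0 ≤ w i i) (H : ∀ i j, i ≠ j → |(a i - m i) - (a j - m j)| ≤ w i j) (i : ι) :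
    1 + (univ.filter (fun j => 0 < a i - a j - w i j)).card ≤
        1 + (univ.filter (fun j => j ≠ i ∧ m j < m i)).card ∧
      n - (univ.filter (fun j => j ≠ i ∧ m i ≤ m j)).card ≤
        n - (univ.filter (fun j => a i - a j + w i j < 0)).card :=
  ⟨Nat.add_le_add_left (card_le_card (filter_pos_sub_sub_subset_filter_lt univ (hw i) (H i))) 1,
    Nat.sub_le_sub_left (card_le_card (filter_sub_add_neg_subset_filter_le univ (hw i) (H i))) n⟩

end SignificantPairs

theorem tukey_rank_CIs_coverage_general (n : ℕ) (μ σ : Fin n → ℝ)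
    {Ω : Type*} [MeasureSpace Ω]
    (y : Fin n → Ω → ℝ)
    (q : ℝ) (hq : 0 < q) :
    (∀ ω : Ω,
        (∀ i j : Fin n, i ≠ j →
            |(y i ω - μ i) - (y j ω - μ j)| ≤ q * Real.sqrt (σ i ^ 2 + σ j ^ 2)) →
          ∀ i : Fin n,
            (1 + (Finset.univ.filter
                (fun j => 0 < y i ω - y j ω - q * Real.sqrt (σ i ^ 2 + σ j ^ 2))).card ≤
              1 + (Finset.univ.filter (fun j => j ≠ i ∧ μ j < μ i)).card) ∧
            (n - (Finset.univ.filter (fun j => j ≠ i ∧ μ i ≤ μ j)).card ≤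
              n - (Finset.univ.filter
                (fun j => y i ω - y j ω + q * Real.sqrt (σ i ^ 2 + σ j ^ 2) < 0)).card)) ∧
    ℙ {ω : Ω | ∀ i : Fin n,
          (1 + (Finset.univ.filter
              (fun j => 0 < y i ω - y j ω - q * Real.sqrt (σ i ^ 2 + σ j ^ 2))).card ≤
            1 + (Finset.univ.filter (fun j => j ≠ i ∧ μ j < μ i)).card) ∧
          (n - (Finset.univ.filter (fun j => j ≠ i ∧ μ i ≤ μ j)).card ≤
            n - (Finset.univ.filter
              (fun j => y i ω - y j ω + q * Real.sqrt (σ i ^ 2 + σ j ^ 2) < 0)).card)} ≥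
      ℙ {ω : Ω | ∀ i j : Fin n, i ≠ j →
          |(y i ω - μ i) - (y j ω - μ j)| ≤ q * Real.sqrt (σ i ^ 2 + σ j ^ 2)} := by
  have hw : ∀ i, 0 ≤ q * Real.sqrt (σ i ^ 2 + σ i ^ 2) := fun i => by positivity
  exact ⟨fun ω H => card_rank_bounds_of_forall_abs_sub_le n
      (w := fun i j => q * Real.sqrt (σ i ^ 2 + σ j ^ 2)) hw H,
    measure_mono fun ω hω => card_rank_bounds_of_forall_abs_sub_le n
      (w := fun i j => q * Real.sqrt (σ i ^ 2 + σ j ^ 2)) hw hω⟩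

theorem tukey_rank_CIs_coverage (n : ℕ) (hn : 1 ≤ n) (μ σ : Fin n → ℝ)
    (hσ : ∀ i, 0 < σ i) {Ω : Type*} [MeasureSpace Ω] [IsProbabilityMeasure (ℙ : Measure Ω)]
    (y : Fin n → Ω → ℝ) (hmeas : ∀ i, Measurable (y i))
    (hindep : iIndepFun y ℙ)
    (hgauss : ∀ i, Measure.map (y i) ℙ = gaussianReal (μ i) ⟨σ i ^ 2, sq_nonneg _⟩)
    (q : ℝ) (hq : 0 < q) :
    (∀ ω : Ω,
        (∀ i j : Fin n, i ≠ j →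
            |(y i ω - μ i) - (y j ω - μ j)| ≤ q * Real.sqrt (σ i ^ 2 + σ j ^ 2)) →
          ∀ i : Fin n,
            (1 + (Finset.univ.filter
                (fun j => 0 < y i ω - y j ω - q * Real.sqrt (σ i ^ 2 + σ j ^ 2))).card ≤
              1 + (Finset.univ.filter (fun j => j ≠ i ∧ μ j < μ i)).card) ∧
            (n - (Finset.univ.filter (fun j => j ≠ i ∧ μ i ≤ μ j)).card ≤
              n - (Finset.univ.filter
                (fun j => y i ω - y j ω + q * Real.sqrt (σ i ^ 2 + σ j ^ 2) < 0)).card)) ∧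
    ℙ {ω : Ω | ∀ i : Fin n,
          (1 + (Finset.univ.filter
              (fun j => 0 < y i ω - y j ω - q * Real.sqrt (σ i ^ 2 + σ j ^ 2))).card ≤
            1 + (Finset.univ.filter (fun j => j ≠ i ∧ μ j < μ i)).card) ∧
          (n - (Finset.univ.filter (fun j => j ≠ i ∧ μ i ≤ μ j)).card ≤
            n - (Finset.univ.filter
              (fun j => y i ω - y j ω + q * Real.sqrt (σ i ^ 2 + σ j ^ 2) < 0)).card)} ≥
      ℙ {ω : Ω | ∀ i j : Fin n, i ≠ j →
          |(y i ω - μ i) - (y j ω - μ j)| ≤ q * Real.sqrt (σ i ^ 2 + σ j ^ 2)} :=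
  tukey_rank_CIs_coverage_general n μ σ y q hq
end
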